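/- Pohozaev-type identity: let ψ : ℝⁿ → ℂᴺ be a smooth solution of the Soler equation Dψ = λψ + μ|ψ|²ψ, and let η : [0,∞) → ℝ be smooth, compactly supported, and constant in a neighborhood of 0. Then ∫_{ℝⁿ} (2λ|ψ|² + (2−n)μ|ψ|⁴) η(|x|) dx = −∫_{ℝⁿ} ( 2⟨ψ, ∂_r·∇_{∂_r}ψ⟩ − μ|ψ|⁴ ) |x| η′(|x|) dx, where for x ≠ 0 one sets ⟨ψ, ∂_r·∇_{∂_r}ψ⟩(x) := ∑_{i,j} (xᵢxⱼ/|x|²) ⟨ψ(x), γᵢ ∂ⱼψ(x)⟩ (the integrand on the right vanishes near the origin since η′ does). -/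

import Mathlib

open Matrix MeasureTheory

noncomputable section

/-- Partial derivative of `f` in the `i`-th coordinate direction at `x`. -/
def epd {n : ℕ} {E : Type*} [NormedAddCommGroup E] [NormedSpace ℝ E]
    (f : EuclideanSpace ℝ (Fin n) → E) (i : Fin n) (x : EuclideanSpace ℝ (Fin n)) : E :=
  fderiv ℝ f x (EuclideanSpace.single i 1)

/-- The Euclidean Dirac operator associated to the matrices `γ`. -/
def Dirac {n N : ℕ} (γ : Fin n → Matrix (Fin N) (Fin N) ℂ)
    (ψ : EuclideanSpace ℝ (Fin n) → (Fin N → ℂ)) (x : EuclideanSpace ℝ (Fin n)) :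
    Fin N → ℂ :=
  ∑ i, (γ i).mulVec (epd ψ i x)

/-- Real part of the standard Hermitian inner product on `ℂᴺ`. -/
def rinner {N : ℕ} (a b : Fin N → ℂ) : ℝ := (∑ k, star (a k) * b k).re

/-- Squared Hermitian norm on `ℂᴺ`. -/
def nsq {N : ℕ} (a : Fin N → ℂ) : ℝ := rinner a a

/-- The matrices `γᵢ` are skew-Hermitian and satisfy the Clifford relations
`γᵢγⱼ + γⱼγᵢ = -2 δᵢⱼ Id`. -/
def IsCliffordFamily {n N : ℕ} (γ : Fin n → Matrix (Fin N) (Fin N) ℂ) : Prop :=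
  (∀ i, (γ i)ᴴ = -(γ i)) ∧
  (∀ i j, γ i * γ j + γ j * γ i =
    if i = j then -(2 : ℂ) • (1 : Matrix (Fin N) (Fin N) ℂ) else 0)

/-- The Soler equation `Dψ = λψ + μ|ψ|²ψ`. -/
def IsSolerSolution {n N : ℕ} (γ : Fin n → Matrix (Fin N) (Fin N) ℂ) (lam mu : ℝ)
    (ψ : EuclideanSpace ℝ (Fin n) → (Fin N → ℂ)) : Prop :=
  ∀ x, Dirac γ ψ x = (lam + mu * nsq (ψ x)) • ψ x

/-- The radial term `⟨ψ, ∂_r·∇_{∂_r}ψ⟩(x) = ∑_{i,j} ((x-x₀)ᵢ(x-x₀)ⱼ/|x-x₀|²) ⟨ψ, γᵢ∂ⱼψ⟩`. -/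
def radTerm {n N : ℕ} (γ : Fin n → Matrix (Fin N) (Fin N) ℂ)
    (ψ : EuclideanSpace ℝ (Fin n) → (Fin N → ℂ))
    (x₀ x : EuclideanSpace ℝ (Fin n)) : ℝ :=
  ∑ i, ∑ j, ((x i - x₀ i) * (x j - x₀ j) / ‖x - x₀‖ ^ 2)
    * rinner (ψ x) ((γ i).mulVec (epd ψ j x))

/-!
The identity is the divergence theorem for the compactly supported vector field `η(|x|) V`, where
`Vⱼ = 2⟨ψ, γⱼ ∂_X ψ⟩ - μ|ψ|⁴ xⱼ` and `∂_X = ∑ᵢ xᵢ ∂ᵢ` is the Euler field. Since the `γⱼ` are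
skew-Hermitian and second derivatives commute, `∑ⱼ ∂ⱼ⟨ψ, γⱼ ∂ᵢψ⟩ = ⟨ψ, ∂ᵢDψ⟩ - ⟨Dψ, ∂ᵢψ⟩`, and
the Soler equation turns this into `2μ|ψ|²⟨ψ, ∂ᵢψ⟩`; together with `⟨ψ, Dψ⟩ = (λ + μ|ψ|²)|ψ|²`
this gives `div V = 2λ|ψ|² + (2 - n)μ|ψ|⁴`. The remaining part `∇(η(|x|)) · V` of the divergence
is `η'(|x|)/|x| · ∑ⱼ xⱼVⱼ`, which is the radial term.
-/

open Filter Topology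

section RealInner

variable {N : ℕ}

lemma rinner_comm (a b : Fin N → ℂ) : rinner a b = rinner b a := by
  rw [rinner, rinner, ← Complex.conj_re, map_sum]
  exact congrArg _ (Finset.sum_congr rfl fun k _ => by simp [mul_comm])

lemma rinner_add_right (a b c : Fin N → ℂ) : rinner a (b + c) = rinner a b + rinner a c := by
  simp [rinner, mul_add, Finset.sum_add_distrib]

lemma rinner_smul_right (r : ℝ) (a b : Fin N → ℂ) : rinner a (r • b) = r * rinner a b := by
  simp [rinner, Finset.mul_sum, Complex.real_smul, mul_left_comm]

lemma rinner_add_left (a b c : Fin N → ℂ) : rinner (a + b) c = rinner a c + rinner b c := by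
  simp only [rinner_comm _ c, rinner_add_right]

lemma rinner_smul_left (r : ℝ) (a b : Fin N → ℂ) : rinner (r • a) b = r * rinner a b := by
  simp only [rinner_comm _ b, rinner_smul_right]

def rinnerCLM : (Fin N → ℂ) →L[ℝ] (Fin N → ℂ) →L[ℝ] ℝ :=
  LinearMap.toContinuousLinearMap <| LinearMap.toContinuousLinearMap.toLinearMap ∘ₗ
    LinearMap.mk₂ ℝ rinner rinner_add_left rinner_smul_left rinner_add_right rinner_smul_right

@[simp] lemma rinnerCLM_apply (a b : Fin N → ℂ) : rinnerCLM a b = rinner a b := rfl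

lemma rinner_sum_right {ι : Type*} (s : Finset ι) (a : Fin N → ℂ) (f : ι → Fin N → ℂ) :
    rinner a (∑ i ∈ s, f i) = ∑ i ∈ s, rinner a (f i) :=
  map_sum (rinnerCLM a) f s

lemma rinner_sum_left {ι : Type*} (s : Finset ι) (f : ι → Fin N → ℂ) (a : Fin N → ℂ) :
    rinner (∑ i ∈ s, f i) a = ∑ i ∈ s, rinner (f i) a := by
  simp only [rinner_comm _ a, rinner_sum_right]

lemma rinner_mulVec_of_skew {M : Matrix (Fin N) (Fin N) ℂ} (hM : Mᴴ = -M) (a b : Fin N → ℂ) :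
    rinner a (M *ᵥ b) = -rinner (M *ᵥ a) b := by
  have hadj : rinner a (M *ᵥ b) = rinner (Mᴴ *ᵥ a) b := by
    simp only [rinner, mulVec, dotProduct, conjTranspose_apply, star_sum, star_mul', star_star,
      Finset.mul_sum, Finset.sum_mul]
    rw [Finset.sum_comm]
    exact congrArg _ (Finset.sum_congr rfl fun k _ => Finset.sum_congr rfl fun l _ => by ring)
  rw [hadj, hM, neg_mulVec, rinner, rinner]
  simp

end RealInner

section PartialDerivatives

variable {n N : ℕ} {E : Type*} [NormedAddCommGroup E] [NormedSpace ℝ E]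
  {x : EuclideanSpace ℝ (Fin n)}

lemma HasFDerivAt.epd_eq {f : EuclideanSpace ℝ (Fin n) → E} {L : EuclideanSpace ℝ (Fin n) →L[ℝ] E}
    (h : HasFDerivAt f L x) (i : Fin n) : epd f i x = L (EuclideanSpace.single i 1) := by
  rw [epd, h.fderiv]

lemma epd_sum {ι : Type*} (s : Finset ι) {f : ι → EuclideanSpace ℝ (Fin n) → E}
    (hf : ∀ j ∈ s, DifferentiableAt ℝ (f j) x) (i : Fin n) :
    epd (fun y => ∑ j ∈ s, f j y) i x = ∑ j ∈ s, epd (f j) i x := by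
  simp [epd, fderiv_fun_sum hf]

lemma epd_sub {f g : EuclideanSpace ℝ (Fin n) → E} (hf : DifferentiableAt ℝ f x)
    (hg : DifferentiableAt ℝ g x) (i : Fin n) :
    epd (fun y => f y - g y) i x = epd f i x - epd g i x := by
  simp [epd, fderiv_fun_sub hf hg]

lemma epd_const_add (c : E) (f : EuclideanSpace ℝ (Fin n) → E) (i : Fin n) :
    epd (fun y => c + f y) i x = epd f i x := by
  simp [epd, fderiv_const_add]

lemma epd_smul {c : EuclideanSpace ℝ (Fin n) → ℝ} {f : EuclideanSpace ℝ (Fin n) → E}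
    (hc : DifferentiableAt ℝ c x) (hf : DifferentiableAt ℝ f x) (i : Fin n) :
    epd (fun y => c y • f y) i x = epd c i x • f x + c x • epd f i x := by
  simp [epd, fderiv_fun_smul hc hf, add_comm]

lemma epd_mul {f g : EuclideanSpace ℝ (Fin n) → ℝ} (hf : DifferentiableAt ℝ f x)
    (hg : DifferentiableAt ℝ g x) (i : Fin n) :
    epd (fun y => f y * g y) i x = epd f i x * g x + f x * epd g i x :=
  epd_smul hf hg i

lemma epd_const_mul (c : ℝ) {f : EuclideanSpace ℝ (Fin n) → ℝ} (hf : DifferentiableAt ℝ f x)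
    (i : Fin n) : epd (fun y => c * f y) i x = c * epd f i x := by
  simp [epd, fderiv_const_mul hf]

lemma epd_coord (i j : Fin n) :
    epd (fun y : EuclideanSpace ℝ (Fin n) => y j) i x = if i = j then 1 else 0 := by
  refine ((EuclideanSpace.proj (𝕜 := ℝ) j).hasFDerivAt.epd_eq i).trans ?_
  simp [eq_comm]

lemma epd_coord_mul {f : EuclideanSpace ℝ (Fin n) → ℝ} (hf : DifferentiableAt ℝ f x) (i j : Fin n) :
    epd (fun y => y j * f y) i x = (if i = j then f x else 0) + x j * epd f i x := by
  rw [epd_mul (by fun_prop) hf, epd_coord]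
  split_ifs <;> simp

lemma epd_rinner {f g : EuclideanSpace ℝ (Fin n) → Fin N → ℂ} (hf : DifferentiableAt ℝ f x)
    (hg : DifferentiableAt ℝ g x) (i : Fin n) :
    epd (fun y => rinner (f y) (g y)) i x
      = rinner (epd f i x) (g x) + rinner (f x) (epd g i x) := by
  have h := (rinnerCLM.hasFDerivAt.comp x hf.hasFDerivAt).clm_apply hg.hasFDerivAt
  refine (h.epd_eq i).trans ?_
  simp [epd, add_comm]

def mulVecCLM (M : Matrix (Fin N) (Fin N) ℂ) : (Fin N → ℂ) →L[ℝ] Fin N → ℂ :=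
  (M.mulVecLin.restrictScalars ℝ).toContinuousLinearMap

lemma epd_mulVec (M : Matrix (Fin N) (Fin N) ℂ) {f : EuclideanSpace ℝ (Fin n) → Fin N → ℂ}
    (hf : DifferentiableAt ℝ f x) (i : Fin n) :
    epd (fun y => M *ᵥ f y) i x = M *ᵥ epd f i x :=
  ((mulVecCLM M).hasFDerivAt.comp x hf.hasFDerivAt).epd_eq i

lemma DifferentiableAt.const_mulVec (M : Matrix (Fin N) (Fin N) ℂ)
    {f : EuclideanSpace ℝ (Fin n) → Fin N → ℂ} (hf : DifferentiableAt ℝ f x) :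
    DifferentiableAt ℝ (fun y => M *ᵥ f y) x :=
  (mulVecCLM M).differentiableAt.comp x hf

lemma ContDiff.const_mulVec {k : WithTop ℕ∞} (M : Matrix (Fin N) (Fin N) ℂ)
    {f : EuclideanSpace ℝ (Fin n) → Fin N → ℂ} (hf : ContDiff ℝ k f) :
    ContDiff ℝ k (fun y => M *ᵥ f y) :=
  (mulVecCLM M).contDiff.comp hf

lemma DifferentiableAt.rinner {f g : EuclideanSpace ℝ (Fin n) → Fin N → ℂ}
    (hf : DifferentiableAt ℝ f x) (hg : DifferentiableAt ℝ g x) :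
    DifferentiableAt ℝ (fun y => rinner (f y) (g y)) x :=
  (rinnerCLM.differentiableAt.comp x hf).clm_apply hg

lemma ContDiff.rinner {k : WithTop ℕ∞} {f g : EuclideanSpace ℝ (Fin n) → Fin N → ℂ}
    (hf : ContDiff ℝ k f) (hg : ContDiff ℝ k g) : ContDiff ℝ k (fun y => rinner (f y) (g y)) :=
  (rinnerCLM.contDiff.comp hf).clm_apply hg

lemma ContDiff.epd {k : WithTop ℕ∞} {f : EuclideanSpace ℝ (Fin n) → E} (hf : ContDiff ℝ (k + 1) f)
    (i : Fin n) : ContDiff ℝ k (epd f i) :=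
  (hf.fderiv_right le_rfl).clm_apply contDiff_const

lemma epd_epd_comm {f : EuclideanSpace ℝ (Fin n) → E} (hf : ContDiff ℝ 2 f) (i j : Fin n) :
    epd (epd f i) j x = epd (epd f j) i x := by
  have hf' : Differentiable ℝ (fderiv ℝ f) :=
    (hf.fderiv_right (m := 1) (by norm_num)).differentiable one_ne_zero
  have hsecond : ∀ a b : Fin n, epd (epd f a) b x
      = fderiv ℝ (fderiv ℝ f) x (EuclideanSpace.single b 1) (EuclideanSpace.single a 1) := by
    intro a b
    rw [epd, show epd f a = fun y => fderiv ℝ f y (EuclideanSpace.single a 1) from rfl,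
      fderiv_clm_apply (hf' x) (differentiableAt_const _)]
    simp
  rw [hsecond, hsecond, hf.contDiffAt.isSymmSndFDerivAt (by simp)]

end PartialDerivatives

section Soler

variable {n N : ℕ} {γ : Fin n → Matrix (Fin N) (Fin N) ℂ} {lam mu : ℝ}
  {ψ : EuclideanSpace ℝ (Fin n) → Fin N → ℂ}

lemma epd_nsq (hψ : Differentiable ℝ ψ) (i : Fin n) (x : EuclideanSpace ℝ (Fin n)) :
    epd (fun y => nsq (ψ y)) i x = 2 * rinner (ψ x) (epd ψ i x) := by
  rw [show (fun y => nsq (ψ y)) = fun y => rinner (ψ y) (ψ y) from rfl,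
    epd_rinner (hψ x) (hψ x), rinner_comm]
  ring

lemma epd_dirac (hψ : ContDiff ℝ 2 ψ) (i : Fin n) (x : EuclideanSpace ℝ (Fin n)) :
    epd (Dirac γ ψ) i x = ∑ j, γ j *ᵥ epd (epd ψ i) j x := by
  have hdψ : ∀ j, Differentiable ℝ (epd ψ j) := fun j => (hψ.epd j).differentiable one_ne_zero
  rw [show Dirac γ ψ = fun y => ∑ j, γ j *ᵥ epd ψ j y from rfl,
    epd_sum _ fun j _ => (hdψ j x).const_mulVec (γ j)]
  exact Finset.sum_congr rfl fun j _ => by rw [epd_mulVec _ (hdψ j x), epd_epd_comm hψ]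

lemma IsSolerSolution.sum_rinner_mulVec_epd (hsoler : IsSolerSolution γ lam mu ψ)
    (x : EuclideanSpace ℝ (Fin n)) :
    ∑ j, rinner (ψ x) (γ j *ᵥ epd ψ j x) = (lam + mu * nsq (ψ x)) * nsq (ψ x) := by
  rw [← rinner_sum_right, ← Dirac, hsoler, rinner_smul_right, nsq]

lemma IsSolerSolution.epd_dirac (hsoler : IsSolerSolution γ lam mu ψ) (hψ : Differentiable ℝ ψ)
    (i : Fin n) (x : EuclideanSpace ℝ (Fin n)) :
    epd (Dirac γ ψ) i x = (2 * mu * rinner (ψ x) (epd ψ i x)) • ψ x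
      + (lam + mu * nsq (ψ x)) • epd ψ i x := by
  have hnsq : DifferentiableAt ℝ (fun y => nsq (ψ y)) x := (hψ x).rinner (hψ x)
  rw [funext hsoler, epd_smul ((hnsq.const_mul mu).const_add lam) (hψ x), epd_const_add,
    epd_const_mul _ hnsq, epd_nsq hψ]
  ring_nf

lemma sum_epd_rinner_mulVec_epd (hγ : ∀ j, (γ j)ᴴ = -γ j) (hψ : ContDiff ℝ 2 ψ)
    (hsoler : IsSolerSolution γ lam mu ψ) (i : Fin n) (x : EuclideanSpace ℝ (Fin n)) :
    ∑ j, epd (fun y => rinner (ψ y) (γ j *ᵥ epd ψ i y)) j x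
      = 2 * mu * nsq (ψ x) * rinner (ψ x) (epd ψ i x) := by
  have hψ1 : Differentiable ℝ ψ := hψ.differentiable two_ne_zero
  have hdψ : Differentiable ℝ (epd ψ i) := (hψ.epd i).differentiable one_ne_zero
  have hfirst : ∑ j, rinner (epd ψ j x) (γ j *ᵥ epd ψ i x)
      = -((lam + mu * nsq (ψ x)) * rinner (ψ x) (epd ψ i x)) := by
    simp only [rinner_mulVec_of_skew (hγ _), Finset.sum_neg_distrib, ← rinner_sum_left]
    rw [← Dirac, hsoler, rinner_smul_left]
  have hsecond : ∑ j, rinner (ψ x) (γ j *ᵥ epd (epd ψ i) j x)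
      = 2 * mu * rinner (ψ x) (epd ψ i x) * nsq (ψ x)
        + (lam + mu * nsq (ψ x)) * rinner (ψ x) (epd ψ i x) := by
    rw [← rinner_sum_right, ← epd_dirac hψ, hsoler.epd_dirac hψ1, rinner_add_right,
      rinner_smul_right, rinner_smul_right, nsq]
  simp only [epd_rinner (hψ1 x) ((hdψ x).const_mulVec _), epd_mulVec _ (hdψ x),
    Finset.sum_add_distrib, hfirst, hsecond]
  ring

end Soler

section PohozaevField

variable {n N : ℕ} {γ : Fin n → Matrix (Fin N) (Fin N) ℂ} {lam mu : ℝ}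
  {ψ : EuclideanSpace ℝ (Fin n) → Fin N → ℂ}

def pohozaevField (γ : Fin n → Matrix (Fin N) (Fin N) ℂ) (mu : ℝ)
    (ψ : EuclideanSpace ℝ (Fin n) → Fin N → ℂ) (j : Fin n) (y : EuclideanSpace ℝ (Fin n)) : ℝ :=
  2 * ∑ i, y i * rinner (ψ y) (γ j *ᵥ epd ψ i y) - y j * (mu * nsq (ψ y) ^ 2)

lemma ContDiff.pohozaevField {k : ℕ} (hψ : ContDiff ℝ (k + 1) ψ) (j : Fin n) :
    ContDiff ℝ k (pohozaevField γ mu ψ j) := by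
  have hψk : ContDiff ℝ k ψ := hψ.of_le le_self_add
  refine (contDiff_const.mul (ContDiff.sum fun i _ => (contDiff_piLp_apply 2).mul ?_)).sub
    ((contDiff_piLp_apply 2).mul (contDiff_const.mul ((hψk.rinner hψk).pow 2)))
  exact hψk.rinner ((hψ.epd i).const_mulVec _)

lemma epd_pohozaevField (hψ : ContDiff ℝ 2 ψ) (j : Fin n) (x : EuclideanSpace ℝ (Fin n)) :
    epd (pohozaevField γ mu ψ j) j x
      = 2 * rinner (ψ x) (γ j *ᵥ epd ψ j x)
        + 2 * ∑ i, x i * epd (fun y => rinner (ψ y) (γ j *ᵥ epd ψ i y)) j x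
        - 4 * mu * nsq (ψ x) * (x j * rinner (ψ x) (epd ψ j x)) - mu * nsq (ψ x) ^ 2 := by
  have hψ1 : Differentiable ℝ ψ := hψ.differentiable two_ne_zero
  have hnsq : DifferentiableAt ℝ (fun y => nsq (ψ y)) x := (hψ1 x).rinner (hψ1 x)
  have hnsq2 : DifferentiableAt ℝ (fun y => mu * nsq (ψ y) ^ 2) x := (hnsq.pow 2).const_mul mu
  have hQ : ∀ i, DifferentiableAt ℝ (fun y => rinner (ψ y) (γ j *ᵥ epd ψ i y)) x := fun i =>
    (hψ1 x).rinner ((((hψ.epd i).differentiable one_ne_zero) x).const_mulVec _)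
  have hsum : DifferentiableAt ℝ (fun y => ∑ i, y i * rinner (ψ y) (γ j *ᵥ epd ψ i y)) x := by
    fun_prop (disch := exact hQ _)
  have hquartic : epd (fun y => mu * nsq (ψ y) ^ 2) j x
      = 4 * mu * nsq (ψ x) * rinner (ψ x) (epd ψ j x) := by
    simp only [sq]
    rw [epd_const_mul _ (hnsq.fun_mul hnsq), epd_mul hnsq hnsq, epd_nsq hψ1]
    ring
  unfold pohozaevField
  rw [epd_sub (hsum.const_mul 2) ((by fun_prop : DifferentiableAt ℝ _ x).fun_mul hnsq2),
    epd_const_mul _ hsum, epd_coord_mul hnsq2, hquartic,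
    epd_sum _ fun i _ => (by fun_prop : DifferentiableAt ℝ _ x).fun_mul (hQ i)]
  simp only [epd_coord_mul (hQ _), Finset.sum_add_distrib, Finset.sum_ite_eq, Finset.mem_univ,
    if_true]
  ring

lemma sum_epd_pohozaevField (hγ : ∀ j, (γ j)ᴴ = -γ j) (hψ : ContDiff ℝ 2 ψ)
    (hsoler : IsSolerSolution γ lam mu ψ) (x : EuclideanSpace ℝ (Fin n)) :
    ∑ j, epd (pohozaevField γ mu ψ j) j x
      = 2 * lam * nsq (ψ x) + (2 - n) * mu * nsq (ψ x) ^ 2 := by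
  have hcross : ∑ j, ∑ i, x i * epd (fun y => rinner (ψ y) (γ j *ᵥ epd ψ i y)) j x
      = 2 * mu * nsq (ψ x) * ∑ i, x i * rinner (ψ x) (epd ψ i x) := by
    rw [Finset.sum_comm]
    simp only [← Finset.mul_sum, sum_epd_rinner_mulVec_epd hγ hψ hsoler]
    rw [Finset.mul_sum]
    exact Finset.sum_congr rfl fun i _ => by ring
  simp only [epd_pohozaevField hψ, Finset.sum_sub_distrib, Finset.sum_add_distrib,
    ← Finset.mul_sum, hsoler.sum_rinner_mulVec_epd, hcross, Finset.sum_const, Finset.card_univ,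
    Fintype.card_fin, nsmul_eq_mul]
  ring

lemma norm_sq_mul_radTerm (x : EuclideanSpace ℝ (Fin n)) :
    ‖x‖ ^ 2 * radTerm γ ψ 0 x = ∑ i, ∑ j, x i * x j * rinner (ψ x) (γ i *ᵥ epd ψ j x) := by
  rcases eq_or_ne x 0 with rfl | hx
  · simp
  have hx2 : ‖x‖ ^ 2 ≠ 0 := by positivity
  simp only [radTerm, PiLp.zero_apply, sub_zero, Finset.mul_sum]
  exact Finset.sum_congr rfl fun i _ => Finset.sum_congr rfl fun j _ => by field_simp

lemma sum_coord_mul_pohozaevField (x : EuclideanSpace ℝ (Fin n)) :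
    ∑ j, x j * pohozaevField γ mu ψ j x
      = ‖x‖ ^ 2 * (2 * radTerm γ ψ 0 x - mu * nsq (ψ x) ^ 2) := by
  rw [mul_sub, mul_left_comm, norm_sq_mul_radTerm, EuclideanSpace.real_norm_sq_eq]
  simp only [pohozaevField, mul_sub, Finset.sum_sub_distrib, Finset.mul_sum, Finset.sum_mul]
  congr 1
  · exact Finset.sum_congr rfl fun j _ => Finset.sum_congr rfl fun i _ => by ring
  · exact Finset.sum_congr rfl fun j _ => by ring

end PohozaevField

section RadialCutoff

variable {E : Type*} [NormedAddCommGroup E] {η : ℝ → ℝ}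

lemma comp_norm_eventuallyEq_const (hη0 : η =ᶠ[𝓝 0] fun _ => η 0) :
    (fun y : E => η ‖y‖) =ᶠ[𝓝 0] fun _ => η 0 :=
  (by simpa using continuous_norm.tendsto (0 : E) : Tendsto (‖·‖) (𝓝 (0 : E)) (𝓝 0)).eventually
    hη0

lemma HasCompactSupport.comp_norm [ProperSpace E] (hη : HasCompactSupport η) :
    HasCompactSupport (fun x : E => η ‖x‖) := by
  obtain ⟨R, hR⟩ := hη.isCompact.isBounded.subset_closedBall 0
  refine HasCompactSupport.intro (isCompact_closedBall (0 : E) R) fun x hx =>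
    image_eq_zero_of_notMem_tsupport fun h => hx ?_
  simpa using hR h

lemma hasFDerivAt_norm [InnerProductSpace ℝ E] {x : E} (hx : x ≠ 0) :
    HasFDerivAt (fun y : E => ‖y‖) (‖x‖⁻¹ • innerSL ℝ x) x := by
  have h := (hasStrictFDerivAt_norm_sq x).hasFDerivAt.sqrt (by positivity)
  simp only [Real.sqrt_sq (norm_nonneg _)] at h
  convert h using 1
  ext v
  simp
  field_simp

lemma ContDiff.comp_norm_of_eventuallyEq_const [InnerProductSpace ℝ E] {k : WithTop ℕ∞}
    (hη : ContDiff ℝ k η) (hη0 : η =ᶠ[𝓝 0] fun _ => η 0) : ContDiff ℝ k (fun x : E => η ‖x‖) := by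
  refine contDiff_iff_contDiffAt.2 fun x => ?_
  rcases eq_or_ne x 0 with rfl | hx
  · exact contDiffAt_const.congr_of_eventuallyEq (comp_norm_eventuallyEq_const hη0)
  · exact hη.contDiffAt.comp x (contDiffAt_norm ℝ hx)

lemma epd_comp_norm {n : ℕ} (hη : Differentiable ℝ η) (hη0 : η =ᶠ[𝓝 0] fun _ => η 0) (j : Fin n)
    (x : EuclideanSpace ℝ (Fin n)) : epd (fun y => η ‖y‖) j x = deriv η ‖x‖ * x j / ‖x‖ := by
  rcases eq_or_ne x 0 with rfl | hx
  -- at the origin both sides vanish: `η` is constant near `0`, and `x j / ‖x‖ = 0 / 0 = 0`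
  · rw [epd, (comp_norm_eventuallyEq_const hη0).fderiv_eq]
    simp
  · refine (((hη _).hasDerivAt.comp_hasFDerivAt x (hasFDerivAt_norm hx)).epd_eq j).trans ?_
    simp [EuclideanSpace.inner_single_right]
    field_simp

end RadialCutoff

section Divergence

variable {n : ℕ}

lemma integrable_epd {f : EuclideanSpace ℝ (Fin n) → ℝ} (hf : ContDiff ℝ 1 f)
    (hfs : HasCompactSupport f) (i : Fin n) : Integrable (epd f i) :=
  ((hf.continuous_fderiv one_ne_zero).clm_apply continuous_const).integrable_of_hasCompactSupport
    (hfs.fderiv_apply _ _)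

lemma integral_epd_eq_zero {f : EuclideanSpace ℝ (Fin n) → ℝ} (hf : ContDiff ℝ 1 f)
    (hfs : HasCompactSupport f) (i : Fin n) : ∫ x, epd f i x = 0 := by
  have h := integral_mul_fderiv_eq_neg_fderiv_mul_of_integrable (μ := volume)
    (f := fun _ => (1 : ℝ)) (g := f) (v := EuclideanSpace.single i 1) (by simp)
    (by simp only [one_mul]; exact integrable_epd hf hfs i)
    (by simpa using hf.continuous.integrable_of_hasCompactSupport hfs)
    (fun _ _ => differentiableAt_const _) fun x _ => hf.differentiable one_ne_zero x
  simpa [epd] using h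

lemma integral_sum_epd_eq_zero {F : Fin n → EuclideanSpace ℝ (Fin n) → ℝ}
    (hF : ∀ j, ContDiff ℝ 1 (F j)) (hFs : ∀ j, HasCompactSupport (F j)) :
    ∫ x, ∑ j, epd (F j) j x = 0 := by
  rw [integral_finsetSum _ fun j _ => integrable_epd (hF j) (hFs j) j]
  exact Finset.sum_eq_zero fun j _ => integral_epd_eq_zero (hF j) (hFs j) j

end Divergence

lemma sum_epd_cutoff_mul_pohozaevField {n N : ℕ} {γ : Fin n → Matrix (Fin N) (Fin N) ℂ}
    {lam mu : ℝ} {ψ : EuclideanSpace ℝ (Fin n) → Fin N → ℂ} {η : ℝ → ℝ}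
    (hγ : ∀ j, (γ j)ᴴ = -γ j) (hψ : ContDiff ℝ 2 ψ) (hsoler : IsSolerSolution γ lam mu ψ)
    (hη : ContDiff ℝ 1 η) (hη0 : η =ᶠ[𝓝 0] fun _ => η 0) (x : EuclideanSpace ℝ (Fin n)) :
    ∑ j, epd (fun y => η ‖y‖ * pohozaevField γ mu ψ j y) j x
      = (2 * lam * nsq (ψ x) + (2 - n) * mu * nsq (ψ x) ^ 2) * η ‖x‖
        + (2 * radTerm γ ψ 0 x - mu * nsq (ψ x) ^ 2) * (‖x‖ * deriv η ‖x‖) := by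
  have hcut : Differentiable ℝ (fun y : EuclideanSpace ℝ (Fin n) => η ‖y‖) :=
    (hη.comp_norm_of_eventuallyEq_const hη0).differentiable one_ne_zero
  have hV : ∀ j, Differentiable ℝ (pohozaevField γ mu ψ j) :=
    fun j => (hψ.pohozaevField (k := 1) j).differentiable one_ne_zero
  have hradial : ∑ j, epd (fun y => η ‖y‖) j x * pohozaevField γ mu ψ j x
      = deriv η ‖x‖ / ‖x‖ * ∑ j, x j * pohozaevField γ mu ψ j x := by
    rw [Finset.mul_sum]
    exact Finset.sum_congr rfl fun j _ => by
      rw [epd_comp_norm (hη.differentiable one_ne_zero) hη0]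
      ring
  simp only [epd_mul (hcut x) (hV _ x), Finset.sum_add_distrib, ← Finset.mul_sum, hradial,
    sum_epd_pohozaevField hγ hψ hsoler, sum_coord_mul_pohozaevField]
  rcases eq_or_ne ‖x‖ 0 with hx | hx
  · simp [hx, mul_comm]
  · field_simp
    ring

theorem soler_pohozaev_general {n N : ℕ}
    (γ : Fin n → Matrix (Fin N) (Fin N) ℂ) (hγ : IsCliffordFamily γ)
    (lam mu : ℝ) (ψ : EuclideanSpace ℝ (Fin n) → (Fin N → ℂ))
    (hψ : ContDiff ℝ (⊤ : ℕ∞) ψ) (hsoler : IsSolerSolution γ lam mu ψ)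
    (η : ℝ → ℝ) (hη : ContDiff ℝ (⊤ : ℕ∞) η) (hηsupp : HasCompactSupport η)
    (hη0 : ∃ δ > (0 : ℝ), ∀ t : ℝ, |t| < δ → η t = η 0) :
    ∫ x : EuclideanSpace ℝ (Fin n),
        (2 * lam * nsq (ψ x) + (2 - (n : ℝ)) * mu * (nsq (ψ x)) ^ 2) * η ‖x‖
      = -∫ x : EuclideanSpace ℝ (Fin n),
          (2 * radTerm γ ψ 0 x - mu * (nsq (ψ x)) ^ 2) * (‖x‖ * deriv η ‖x‖) := by
  have hη0' : η =ᶠ[𝓝 0] fun _ => η 0 := by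
    obtain ⟨δ, hδ, hconst⟩ := hη0
    exact Metric.eventually_nhds_iff.2 ⟨δ, hδ, fun {t} ht => hconst t (by simpa using ht)⟩
  have hψ2 : ContDiff ℝ 2 ψ := hψ.of_le (WithTop.coe_le_coe.2 le_top)
  have hη1 : ContDiff ℝ 1 η := hη.of_le (WithTop.coe_le_coe.2 le_top)
  set F : Fin n → EuclideanSpace ℝ (Fin n) → ℝ := fun j y => η ‖y‖ * pohozaevField γ mu ψ j y
  have hF : ∀ j, ContDiff ℝ 1 (F j) := fun j =>
    (hη1.comp_norm_of_eventuallyEq_const hη0').mul (hψ2.pohozaevField (k := 1) j)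
  have hFs : ∀ j, HasCompactSupport (F j) := fun _ => hηsupp.comp_norm.mul_right
  have hA : Integrable fun x : EuclideanSpace ℝ (Fin n) =>
      (2 * lam * nsq (ψ x) + (2 - (n : ℝ)) * mu * (nsq (ψ x)) ^ 2) * η ‖x‖ := by
    have hS : Continuous fun x => nsq (ψ x) := (hψ.rinner hψ).continuous
    have hηc := hη.continuous
    exact Continuous.integrable_of_hasCompactSupport (by fun_prop) hηsupp.comp_norm.mul_left
  have hdiv : (fun x => (2 * radTerm γ ψ 0 x - mu * (nsq (ψ x)) ^ 2) * (‖x‖ * deriv η ‖x‖))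
      = fun x => ∑ j, epd (F j) j x
        - (2 * lam * nsq (ψ x) + (2 - (n : ℝ)) * mu * (nsq (ψ x)) ^ 2) * η ‖x‖ := by
    ext x
    rw [sum_epd_cutoff_mul_pohozaevField hγ.1 hψ2 hsoler hη1 hη0']
    ring
  rw [hdiv, integral_sub (integrable_finsetSum _ fun j _ => integrable_epd (hF j) (hFs j) j) hA,
    integral_sum_epd_eq_zero hF hFs, zero_sub, neg_neg]

/-- Pohozaev-type identity for smooth solutions of the Soler equation,
tested against a compactly supported radial cutoff which is constant near the origin. -/
theorem soler_pohozaev {n N : ℕ} (hn : 1 ≤ n) (hN : 1 ≤ N)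
    (γ : Fin n → Matrix (Fin N) (Fin N) ℂ) (hγ : IsCliffordFamily γ)
    (lam mu : ℝ) (ψ : EuclideanSpace ℝ (Fin n) → (Fin N → ℂ))
    (hψ : ContDiff ℝ (⊤ : ℕ∞) ψ) (hsoler : IsSolerSolution γ lam mu ψ)
    (η : ℝ → ℝ) (hη : ContDiff ℝ (⊤ : ℕ∞) η) (hηsupp : HasCompactSupport η)
    (hη0 : ∃ δ > (0 : ℝ), ∀ t : ℝ, |t| < δ → η t = η 0) :
    ∫ x : EuclideanSpace ℝ (Fin n),
        (2 * lam * nsq (ψ x) + (2 - (n : ℝ)) * mu * (nsq (ψ x)) ^ 2) * η ‖x‖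
      = -∫ x : EuclideanSpace ℝ (Fin n),
          (2 * radTerm γ ψ 0 x - mu * (nsq (ψ x)) ^ 2) * (‖x‖ * deriv η ‖x‖) :=
  soler_pohozaev_general γ hγ lam mu ψ hψ hsoler η hη hηsupp hη0
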